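/- Let m ≥ 1 and 1 ≤ t ≤ 2m+1, set ζ = e^{2πit/(2m+1)}, g = gcd(2m+1, t), and n = (2m+1)/g. Then ∏_{j=1}^{m} (x^2 + 2x - 1 + ζ^j + ζ̄^j) = (2 T_n(z))^g / (2z), where z = (x+1)/2. -/

import Mathlib

/-!
Write `x + 1 = w + v` with `w * v = 1`. Then `x ^ 2 + 2 * x - 1 = w ^ 2 + v ^ 2`, and since
`conj ζ ^ j = ζ ^ (2m+1-j)`, multiplying the `j`-th quadratic by `w ^ 2` gives
`(w ^ 2 + ζ ^ j) * (w ^ 2 + ζ ^ (2m+1-j))`. Together with `w * (w + v) = w ^ 2 + 1` (the term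
`j = 0`), `w ^ (2m+1)` times the left side is `∏_{j < 2m+1} (w ^ 2 + ζ ^ j)`. As `ζ` is a
primitive `n`-th root of unity with `n` odd and `2m+1 = g n`, this is `((w ^ 2) ^ n + 1) ^ g
= w ^ (2m+1) (w ^ n + v ^ n) ^ g`, and `w ^ n + v ^ n = 2 T_n((w + v) / 2)`.
-/

open Polynomial Complex Finset

theorem Function.Periodic.prod_range_mul {M : Type*} [CommMonoid M] {f : ℕ → M} {n : ℕ}
    (hf : Function.Periodic f n) (g : ℕ) :
    ∏ i ∈ range (g * n), f i = (∏ i ∈ range n, f i) ^ g := by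
  induction g with
  | zero => simp
  | succ g ih =>
    rw [Nat.succ_mul, prod_range_add, ih, pow_succ]
    congr 1
    refine prod_congr rfl fun i _ => ?_
    simpa [add_comm] using hf.nat_mul g i

theorem Finset.prod_range_two_mul_add_one {M : Type*} [CommMonoid M] (f : ℕ → M) (m : ℕ) :
    ∏ j ∈ range (2 * m + 1), f j = f 0 * ∏ j ∈ Icc 1 m, f j * f (2 * m + 1 - j) := by
  have hreflect : ∏ j ∈ Icc 1 m, f (2 * m + 1 - j) = ∏ j ∈ Ioc m (2 * m), f j := by
    refine prod_nbij' (2 * m + 1 - ·) (2 * m + 1 - ·) ?_ ?_ ?_ ?_ fun _ _ => rfl <;>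
      intro j hj <;> simp only [mem_Icc, mem_Ioc] at hj ⊢ <;> omega
  have hIcc : Icc 1 m = Ioc 0 m := Icc_add_one_left_eq_Ioc 0 m
  have hIco : Ico 1 (2 * m + 1) = Ioc 0 (2 * m) := by ext; simp only [mem_Ico, mem_Ioc]; omega
  rw [prod_mul_distrib, hreflect, hIcc, prod_Ioc_consecutive _ (Nat.zero_le m) (by omega),
    range_eq_Ico, prod_eq_prod_Ico_succ_bot (by omega), hIco]

theorem IsPrimitiveRoot.prod_range_add_pow {R : Type*} [CommRing R] [IsDomain R] {μ : R} {n : ℕ}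
    (hμ : IsPrimitiveRoot μ n) (hn : Odd n) (c : R) :
    ∏ j ∈ range n, (c + μ ^ j) = c ^ n + 1 := by
  have h := congrArg (eval c) (X_pow_sub_C_eq_prod hμ hn.pos hn.neg_one_pow)
  simpa [eval_prod, sub_eq_add_neg] using h.symm

theorem IsPrimitiveRoot.prod_range_mul_add_pow {R : Type*} [CommRing R] [IsDomain R] {μ : R}
    {n : ℕ} (hμ : IsPrimitiveRoot μ n) (hn : Odd n) (g : ℕ) (c : R) :
    ∏ j ∈ range (g * n), (c + μ ^ j) = (c ^ n + 1) ^ g := by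
  rw [Function.Periodic.prod_range_mul (fun j => by simp [pow_add, hμ.pow_eq_one]),
    hμ.prod_range_add_pow hn]

theorem IsPrimitiveRoot.pow_div_gcd {M : Type*} [CommMonoid M] {ζ : M} {k : ℕ}
    (h : IsPrimitiveRoot ζ k) (hk : k ≠ 0) (t : ℕ) :
    IsPrimitiveRoot (ζ ^ t) (k / k.gcd t) := by
  rw [IsPrimitiveRoot.iff_orderOf, (h.isOfFinOrder hk).orderOf_pow, ← h.eq_orderOf]

theorem Polynomial.Chebyshev.two_mul_T_eval_half_add_of_mul_eq_one {K : Type*} [Field K]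
    [NeZero (2 : K)] {w v : K} (h : w * v = 1) (n : ℕ) :
    2 * (T K n).eval ((w + v) / 2) = w ^ n + v ^ n := by
  have hC := congrArg (eval ((w + v) / 2)) (C_comp_two_mul_X K n)
  simp only [eval_comp, eval_mul, eval_ofNat, eval_X, mul_div_cancel₀ _ (two_ne_zero' K)] at hC
  rw [← hC, ← dickson_one_one_eq_chebyshev_C, dickson_one_one_eval_add_inv w v h]

theorem IsAlgClosed.exists_mul_eq_one_add_eq {K : Type*} [Field K] [IsAlgClosed K] (s : K) :
    ∃ w v : K, w * v = 1 ∧ w + v = s := by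
  obtain ⟨w, hw⟩ := IsAlgClosed.exists_root (C 1 * X ^ 2 + C (-s) * X + C 1)
    (by rw [degree_quadratic one_ne_zero]; decide)
  refine ⟨w, s - w, ?_, by ring⟩
  simp only [IsRoot, eval_add, eval_mul, eval_C, eval_pow, eval_X] at hw
  linear_combination -hw

theorem IsPrimitiveRoot.add_mul_prod_quadratic_eq_pow {K : Type*} [Field K] {μ w v : K}
    {n g m : ℕ} (hμ : IsPrimitiveRoot μ n) (hgn : g * n = 2 * m + 1) (hwv : w * v = 1) :
    (w + v) * ∏ j ∈ Icc 1 m, (w ^ 2 + v ^ 2 + μ ^ j + (μ ^ j)⁻¹) =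
      (w ^ n + v ^ n) ^ g := by
  have hn : Odd n := (Nat.odd_mul.mp (hgn ▸ odd_two_mul_add_one m)).2
  have hμ0 : μ ≠ 0 := hμ.ne_zero hn.pos.ne'
  have hw0 : w ≠ 0 := left_ne_zero_of_mul_eq_one hwv
  have hfactor : ∀ j ∈ Icc 1 m, w ^ 2 * (w ^ 2 + v ^ 2 + μ ^ j + (μ ^ j)⁻¹) =
      (w ^ 2 + μ ^ j) * (w ^ 2 + μ ^ (2 * m + 1 - j)) := by
    intro j hj
    have hμN : μ ^ (2 * m + 1) = 1 := by rw [← hgn, mul_comm, pow_mul, hμ.pow_eq_one, one_pow]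
    rw [pow_sub₀ μ hμ0 (by simp only [mem_Icc] at hj; omega), hμN, one_mul]
    field_simp
    linear_combination μ ^ j * (w * v + 1) * hwv
  apply mul_left_cancel₀ (pow_ne_zero (2 * m + 1) hw0)
  calc w ^ (2 * m + 1) * ((w + v) * ∏ j ∈ Icc 1 m, (w ^ 2 + v ^ 2 + μ ^ j + (μ ^ j)⁻¹))
      = (w ^ 2 + μ ^ 0) * ∏ j ∈ Icc 1 m, w ^ 2 * (w ^ 2 + v ^ 2 + μ ^ j + (μ ^ j)⁻¹) := by
        rw [prod_mul_distrib, prod_const, Nat.card_Icc, add_tsub_cancel_right, ← pow_mul]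
        linear_combination
          (w ^ (2 * m) * ∏ j ∈ Icc 1 m, (w ^ 2 + v ^ 2 + μ ^ j + (μ ^ j)⁻¹)) * hwv
    _ = ∏ j ∈ range (g * n), (w ^ 2 + μ ^ j) := by
        rw [prod_congr rfl hfactor, hgn, prod_range_two_mul_add_one]
    _ = w ^ (2 * m + 1) * (w ^ n + v ^ n) ^ g := by
        rw [hμ.prod_range_mul_add_pow hn, ← hgn, mul_comm g n, pow_mul, ← mul_pow]
        have hwvn : w ^ n * v ^ n = 1 := by rw [← mul_pow, hwv, one_pow]
        congr 1
        linear_combination -hwvn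

theorem prod_quadratics_eq_chebyshev_T_pow_general (m t : ℕ) (x : ℂ) :
    2 * ((x + 1) / 2) *
        ∏ j ∈ Finset.Icc 1 m,
          (x ^ 2 + 2 * x - 1 +
            (Complex.exp (2 * Real.pi * Complex.I * t / (2 * m + 1))) ^ j +
            (starRingEnd ℂ)
              ((Complex.exp (2 * Real.pi * Complex.I * t / (2 * m + 1))) ^ j)) =
      (2 * (Polynomial.Chebyshev.T ℂ ((2 * m + 1) / Nat.gcd (2 * m + 1) t)).eval
          ((x + 1) / 2)) ^ (Nat.gcd (2 * m + 1) t) := by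
  set ζ := exp (2 * Real.pi * I * t / (2 * m + 1)) with hζdef
  have hN : 2 * m + 1 ≠ 0 := by omega
  have hζ : ζ = exp (2 * Real.pi * I / ↑(2 * m + 1)) ^ t := by
    rw [hζdef, ← exp_nat_mul]; congr 1; push_cast; ring
  have hζ₁ := isPrimitiveRoot_exp (2 * m + 1) hN
  have hconj (j : ℕ) : starRingEnd ℂ (ζ ^ j) = (ζ ^ j)⁻¹ :=
    (inv_eq_conj (by rw [hζ, ← pow_mul, norm_pow, hζ₁.norm'_eq_one hN, one_pow])).symm
  obtain ⟨w, v, hwv, hsum⟩ := IsAlgClosed.exists_mul_eq_one_add_eq (x + 1)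
  have hquad : x ^ 2 + 2 * x - 1 = w ^ 2 + v ^ 2 := by
    linear_combination (x + 1 + w + v) * hsum.symm + 2 * hwv
  have hidx : (2 * m + 1 : ℤ) / ((2 * m + 1).gcd t : ℕ) =
      ((2 * m + 1) / (2 * m + 1).gcd t : ℕ) := by
    push_cast; rfl
  rw [hidx, ← hsum, Chebyshev.two_mul_T_eval_half_add_of_mul_eq_one hwv,
    mul_div_cancel₀ _ (two_ne_zero' ℂ)]
  simp_rw [hconj, hquad]
  exact (hζ ▸ hζ₁.pow_div_gcd hN t).add_mul_prod_quadratic_eq_pow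
    (Nat.mul_div_cancel' (Nat.gcd_dvd_left _ _)) hwv

theorem prod_quadratics_eq_chebyshev_T_pow (m t : ℕ) (hm : 1 ≤ m)
    (ht : 1 ≤ t) (ht' : t ≤ 2 * m + 1) (x : ℂ) :
    2 * ((x + 1) / 2) *
        ∏ j ∈ Finset.Icc 1 m,
          (x ^ 2 + 2 * x - 1 +
            (Complex.exp (2 * Real.pi * Complex.I * t / (2 * m + 1))) ^ j +
            (starRingEnd ℂ)
              ((Complex.exp (2 * Real.pi * Complex.I * t / (2 * m + 1))) ^ j)) =
      (2 * (Polynomial.Chebyshev.T ℂ ((2 * m + 1) / Nat.gcd (2 * m + 1) t)).eval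
          ((x + 1) / 2)) ^ (Nat.gcd (2 * m + 1) t) :=
  prod_quadratics_eq_chebyshev_T_pow_general m t x
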